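/- arXiv:2605.09155 — 3 statements merged into one kernel-verified Lean document; each statement's English description precedes it below -/
import Mathlib

section
/- Let k be a perfect field of positive characteristic p and let L ⊇ K be a purely inseparable finite extension of fields, each of transcendence degree 1 over k, with K containing an element t transcendental over k such that [K : k(t)] is finite. Then there exists m ∈ ℕ such that K = {x^{p^m} : x ∈ L} (i.e. the inclusion K ⊆ L is given by the m-th power relative Frobenius over k). -/
/-!
Write `L^{p^n}` for the subfield of `p^n`-th powers. Since `k` is perfect, `k(t)^p = k(t^p)`,
so `[k(t) : k(t)^p] = p`. As `L` is finite over `k(t)`, computing `[L : k(t)^p]` through `L^p` and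
through `k(t)`, with `[L^p : k(t)^p] = [L : k(t)]` by Frobenius, gives `[L : L^p] = p`; transporting
by Frobenius, no field lies strictly between `L^{p^(n+1)}` and `L^{p^n}`.

Now `K ⊇ L^{p^e}` for some `e`. If `m` is largest with `K ⊆ L^{p^m}`, then
`K ⊔ L^{p^(m+1)} = L^{p^m}`; applying `Fr^j` and using `K^{p^j} ⊆ K` gives
`L^{p^m} = K ⊔ L^{p^(m+j)}` for every `j`, and this is `K` once `m + j ≥ e`.
-/

open IntermediateField

namespace Subfield

variable {L : Type*} [Field L]

theorem eq_or_eq_of_relfinrank_prime {A S B : Subfield L} (hAS : A ≤ S) (hSB : S ≤ B)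
    (hAB : (relfinrank A B).Prime) : S = A ∨ S = B := by
  rw [← relfinrank_mul_relfinrank hAS hSB, Nat.prime_mul_iff] at hAB
  rcases hAB with ⟨-, h⟩ | ⟨-, h⟩
  · exact .inr (le_antisymm hSB (relfinrank_eq_one_iff.1 h))
  · exact .inl (le_antisymm (relfinrank_eq_one_iff.1 h) hAS)

theorem map_iterateFrobenius_le {p : ℕ} [ExpChar L p] (S : Subfield L) (n : ℕ) :
    S.map (iterateFrobenius L p n) ≤ S := by
  rintro _ ⟨x, hx, rfl⟩
  exact pow_mem hx _

theorem relfinrank_fieldRange_algebraMap_top (M L : Type*) [Field M] [Field L] [Algebra M L] :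
    (algebraMap M L).fieldRange.relfinrank ⊤ = Module.finrank M L := by
  rw [← bot_toSubfield, ← top_toSubfield (F := M)]
  exact (IntermediateField.relfinrank_bot_left _).trans finrank_top'

end Subfield

theorem IntermediateField.map_iterateFrobenius_adjoin_simple_toSubfield {k F : Type*} [Field k]
    [Field F] [Algebra k F] (p : ℕ) [ExpChar k p] [ExpChar F p] [PerfectRing k p] (n : ℕ)
    (x : F) : (k⟮x⟯.toSubfield).map (iterateFrobenius F p n) = k⟮x ^ p ^ n⟯.toSubfield := by
  rw [adjoin_toSubfield, adjoin_toSubfield, RingHom.map_field_closure, Set.image_union,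
    Set.image_singleton, ← Set.range_comp, ← RingHom.coe_comp, ← RingHom.iterateFrobenius_comm,
    RingHom.coe_comp, Set.range_comp, (bijective_iterateFrobenius k p n).surjective.range_eq,
    Set.image_univ]
  rfl

section IterateFrobeniusRange

variable (L : Type*) [Field L] (p : ℕ) [ExpChar L p]

def iterateFrobeniusRange (n : ℕ) : Subfield L := (iterateFrobenius L p n).fieldRange

variable {L p}

theorem coe_iterateFrobeniusRange (n : ℕ) :
    (iterateFrobeniusRange L p n : Set L) = Set.range (fun x : L => x ^ p ^ n) := by
  rw [iterateFrobeniusRange, RingHom.coe_fieldRange]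
  rfl

theorem mem_iterateFrobeniusRange {n : ℕ} {x : L} :
    x ∈ iterateFrobeniusRange L p n ↔ ∃ y : L, y ^ p ^ n = x := by
  rw [← SetLike.mem_coe, coe_iterateFrobeniusRange, Set.mem_range]

theorem iterateFrobeniusRange_zero : iterateFrobeniusRange L p 0 = ⊤ :=
  eq_top_iff.2 fun x _ => mem_iterateFrobeniusRange.2 ⟨x, by simp⟩

theorem map_iterateFrobeniusRange (m n : ℕ) :
    (iterateFrobeniusRange L p n).map (iterateFrobenius L p m) =
      iterateFrobeniusRange L p (m + n) := by
  simp only [iterateFrobeniusRange, RingHom.fieldRange_eq_map, Subfield.map_map,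
    iterateFrobenius_add]

theorem iterateFrobeniusRange_antitone : Antitone (iterateFrobeniusRange L p) := by
  intro a b hab x hx
  obtain ⟨y, rfl⟩ := mem_iterateFrobeniusRange.1 hx
  exact mem_iterateFrobeniusRange.2
    ⟨y ^ p ^ (b - a), by rw [← pow_mul, ← pow_add, Nat.sub_add_cancel hab]⟩

theorem relfinrank_iterateFrobeniusRange_succ (n : ℕ) :
    (iterateFrobeniusRange L p (n + 1)).relfinrank (iterateFrobeniusRange L p n) =
      (iterateFrobeniusRange L p 1).relfinrank ⊤ := by
  rw [← Subfield.relfinrank_map_map (iterateFrobeniusRange L p 1) ⊤ (iterateFrobenius L p n),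
    map_iterateFrobeniusRange, ← iterateFrobeniusRange_zero (L := L) (p := p),
    map_iterateFrobeniusRange]
  rfl

theorem relfinrank_iterateFrobeniusRange_one_eq {M : Type*} [Field M] [ExpChar M p]
    (f : M →+* L) (hf : f.fieldRange.relfinrank ⊤ ≠ 0) :
    (iterateFrobeniusRange L p 1).relfinrank ⊤ = (iterateFrobeniusRange M p 1).relfinrank ⊤ := by
  set E := f.fieldRange
  set Ep := E.map (iterateFrobenius L p 1)
  have hEp : (iterateFrobeniusRange M p 1).map f = Ep := by
    simp only [Ep, E, iterateFrobeniusRange, RingHom.fieldRange_eq_map, Subfield.map_map,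
      f.iterateFrobenius_comm]
  have hEpE : Ep.relfinrank E = (iterateFrobeniusRange M p 1).relfinrank ⊤ := by
    rw [← hEp, ← Subfield.relfinrank_map_map _ ⊤ f, ← RingHom.fieldRange_eq_map]
  have hEpL : Ep.relfinrank (iterateFrobeniusRange L p 1) = E.relfinrank ⊤ := by
    rw [← Subfield.relfinrank_map_map E ⊤ (iterateFrobenius L p 1), ← RingHom.fieldRange_eq_map]
    rfl
  have hEp_le : Ep ≤ iterateFrobeniusRange L p 1 := by
    rintro _ ⟨x, -, rfl⟩
    exact ⟨x, rfl⟩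
  refine Nat.eq_of_mul_eq_mul_left (Nat.pos_of_ne_zero hf) ?_
  calc E.relfinrank ⊤ * (iterateFrobeniusRange L p 1).relfinrank ⊤
      = Ep.relfinrank ⊤ := by rw [← hEpL, Subfield.relfinrank_mul_relfinrank hEp_le le_top]
    _ = E.relfinrank ⊤ * (iterateFrobeniusRange M p 1).relfinrank ⊤ := by
      rw [← Subfield.relfinrank_mul_relfinrank (E.map_iterateFrobenius_le 1) le_top, hEpE,
        mul_comm]

theorem relfinrank_iterateFrobeniusRange_one_congr {M : Type*} [Field M] [ExpChar M p]
    (e : M ≃+* L) :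
    (iterateFrobeniusRange L p 1).relfinrank ⊤ = (iterateFrobeniusRange M p 1).relfinrank ⊤ := by
  refine relfinrank_iterateFrobeniusRange_one_eq (e : M →+* L) ?_
  rw [(RingHom.fieldRange_eq_top_iff (f := (e : M →+* L))).2 e.surjective,
    Subfield.relfinrank_self]
  exact one_ne_zero

theorem eq_or_eq_of_iterateFrobeniusRange_le
    (hL : ((iterateFrobeniusRange L p 1).relfinrank ⊤).Prime) {n : ℕ} {S : Subfield L}
    (h₁ : iterateFrobeniusRange L p (n + 1) ≤ S) (h₂ : S ≤ iterateFrobeniusRange L p n) :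
    S = iterateFrobeniusRange L p (n + 1) ∨ S = iterateFrobeniusRange L p n :=
  Subfield.eq_or_eq_of_relfinrank_prime h₁ h₂ (by rwa [relfinrank_iterateFrobeniusRange_succ])

theorem iterateFrobeniusRange_succ_lt (hL : ((iterateFrobeniusRange L p 1).relfinrank ⊤).Prime)
    (n : ℕ) : iterateFrobeniusRange L p (n + 1) < iterateFrobeniusRange L p n := by
  refine lt_of_le_of_ne (iterateFrobeniusRange_antitone n.le_succ) fun h => hL.one_lt.ne' ?_
  rw [← relfinrank_iterateFrobeniusRange_succ n, h, Subfield.relfinrank_self]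

theorem eq_iterateFrobeniusRange_of_le_of_not_le
    (hL : ((iterateFrobeniusRange L p 1).relfinrank ⊤).Prime) {K : Subfield L} {m e : ℕ}
    (hm : K ≤ iterateFrobeniusRange L p m) (hm' : ¬K ≤ iterateFrobeniusRange L p (m + 1))
    (he : iterateFrobeniusRange L p e ≤ K) : K = iterateFrobeniusRange L p m := by
  have hsup : K ⊔ iterateFrobeniusRange L p (m + 1) = iterateFrobeniusRange L p m :=
    (eq_or_eq_of_iterateFrobeniusRange_le hL le_sup_right
      (sup_le hm (iterateFrobeniusRange_antitone m.le_succ))).resolve_left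
      fun h => hm' (h ▸ le_sup_left)
  have hstep (j : ℕ) :
      iterateFrobeniusRange L p (j + m) ≤ K ⊔ iterateFrobeniusRange L p (j + (m + 1)) :=
    calc iterateFrobeniusRange L p (j + m)
        = (iterateFrobeniusRange L p m).map (iterateFrobenius L p j) :=
          (map_iterateFrobeniusRange j m).symm
      _ = K.map (iterateFrobenius L p j) ⊔ iterateFrobeniusRange L p (j + (m + 1)) := by
          rw [← hsup, Subfield.map_sup, map_iterateFrobeniusRange]
      _ ≤ _ := sup_le_sup_right (K.map_iterateFrobenius_le j) _
  have hchain (j : ℕ) : iterateFrobeniusRange L p m ≤ K ⊔ iterateFrobeniusRange L p (j + m) := by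
    induction j with
    | zero => rw [zero_add]; exact le_sup_right
    | succ j ih =>
      calc iterateFrobeniusRange L p m ≤ K ⊔ iterateFrobeniusRange L p (j + m) := ih
        _ ≤ K ⊔ (K ⊔ iterateFrobeniusRange L p (j + (m + 1))) := sup_le_sup_left (hstep j) K
        _ = K ⊔ iterateFrobeniusRange L p (j + 1 + m) := by
          rw [← sup_assoc, sup_idem, show j + (m + 1) = j + 1 + m by omega]
  refine le_antisymm hm ((hchain e).trans (sup_le le_rfl ?_))
  exact (iterateFrobeniusRange_antitone (Nat.le_add_right e m)).trans he

theorem exists_eq_iterateFrobeniusRange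
    (hL : ((iterateFrobeniusRange L p 1).relfinrank ⊤).Prime) {K : Subfield L} {e : ℕ}
    (he : iterateFrobeniusRange L p e ≤ K) : ∃ m, K = iterateFrobeniusRange L p m := by
  classical
  set m := Nat.findGreatest (fun n => K ≤ iterateFrobeniusRange L p n) e
  have hm : K ≤ iterateFrobeniusRange L p m :=
    Nat.findGreatest_spec (P := fun n => K ≤ iterateFrobeniusRange L p n) (Nat.zero_le e)
      (iterateFrobeniusRange_zero (L := L) (p := p) ▸ le_top)
  have hm' : ¬K ≤ iterateFrobeniusRange L p (m + 1) := by
    intro h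
    rcases Nat.lt_or_ge m e with hlt | hge
    · exact Nat.findGreatest_is_greatest (Nat.lt_succ_self m) hlt h
    · have hme : m = e := le_antisymm (Nat.findGreatest_le e) hge
      exact (iterateFrobeniusRange_succ_lt hL e).not_ge (hme ▸ he.trans h)
  exact ⟨m, eq_iterateFrobeniusRange_of_le_of_not_le hL hm hm' he⟩

end IterateFrobeniusRange

theorem RatFunc.relfinrank_iterateFrobeniusRange_one (k : Type*) [Field k] (p : ℕ) [ExpChar k p]
    [PerfectRing k p] [ExpChar (RatFunc k) p] :
    (iterateFrobeniusRange (RatFunc k) p 1).relfinrank ⊤ = p := by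
  have h : iterateFrobeniusRange (RatFunc k) p 1 =
      (adjoin k {(RatFunc.X : RatFunc k) ^ p}).toSubfield := by
    rw [iterateFrobeniusRange, RingHom.fieldRange_eq_map, ← top_toSubfield (F := k),
      ← RatFunc.adjoin_X (K := k), map_iterateFrobenius_adjoin_simple_toSubfield, pow_one]
  rw [h, Subfield.relfinrank_top_right]
  refine (RatFunc.finrank_eq_max_natDegree ((RatFunc.X : RatFunc k) ^ p)).trans ?_
  rw [← RatFunc.algebraMap_X, ← map_pow, RatFunc.num_algebraMap, RatFunc.denom_algebraMap]
  simp

theorem stmt2_general (p : ℕ) (hp : p.Prime)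
    (k K L : Type*) [Field k] [Field K] [Field L]
    [Algebra k K] [Algebra K L]
    [CharP k p] [PerfectField k]
    [IsPurelyInseparable K L] [FiniteDimensional K L]
    (t : K) (ht : Transcendental k t)
    (hfin : FiniteDimensional (IntermediateField.adjoin k {t}) K) :
    ∃ m : ℕ, Set.range (algebraMap K L) = Set.range (fun x : L => x ^ p ^ m) := by
  have : ExpChar k p := .prime hp
  have : ExpChar K p := expChar_of_injective_algebraMap (algebraMap k K).injective p
  have : ExpChar L p := expChar_of_injective_algebraMap (algebraMap K L).injective p
  have : ExpChar k⟮t⟯ p := expChar_of_injective_algebraMap (algebraMap k k⟮t⟯).injective p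
  have : ExpChar (RatFunc k) p :=
    expChar_of_injective_algebraMap (algebraMap k (RatFunc k)).injective p
  have : Module.Finite k⟮t⟯ L := .trans K L
  have hL : (iterateFrobeniusRange L p 1).relfinrank ⊤ = p := by
    rw [relfinrank_iterateFrobeniusRange_one_eq (algebraMap k⟮t⟯ L) ?_,
      relfinrank_iterateFrobeniusRange_one_congr
        (RatFunc.algEquivOfTranscendental t ht).toRingEquiv,
      RatFunc.relfinrank_iterateFrobeniusRange_one]
    rw [Subfield.relfinrank_fieldRange_algebraMap_top]
    exact Module.finrank_pos.ne'
  obtain ⟨m, hm⟩ := exists_eq_iterateFrobeniusRange (hL ▸ hp)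
    (K := (algebraMap K L).fieldRange) (e := IsPurelyInseparable.exponent K L) fun x hx => by
      obtain ⟨y, rfl⟩ := mem_iterateFrobeniusRange.1 hx
      exact IsPurelyInseparable.exponent_def' K p y
  exact ⟨m, by rw [← RingHom.coe_fieldRange, hm, coe_iterateFrobeniusRange]⟩

/-- Let `k` be a perfect field of positive characteristic `p` and `L ⊇ K` a
purely inseparable finite extension of fields, each of transcendence degree 1 over `k`, with
`K` containing an element `t` transcendental over `k` such that `[K : k(t)]` is finite.
Then there exists `m : ℕ` such that `K = {x ^ p ^ m : x ∈ L}`, i.e. the inclusion `K ⊆ L`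
is given by the `m`-th power relative Frobenius over `k`. -/
theorem stmt2 (p : ℕ) (hp : p.Prime)
    (k K L : Type*) [Field k] [Field K] [Field L]
    [Algebra k K] [Algebra K L] [Algebra k L] [IsScalarTower k K L]
    [CharP k p] [PerfectField k]
    [IsPurelyInseparable K L] [FiniteDimensional K L]
    (t : K) (ht : Transcendental k t)
    (hfin : FiniteDimensional (IntermediateField.adjoin k {t}) K) :
    ∃ m : ℕ, Set.range (algebraMap K L) = Set.range (fun x : L => x ^ p ^ m) :=
  stmt2_general p hp k K L t ht hfin
end

section
/- In the setting of the previous lemma: if [L : K] = p^n, then [K^{1/p^n} : K] = p^n, where K^{1/p^n} denotes the field of p^n-th roots of elements of K inside a fixed algebraic closure containing L. -/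
/-!
Let `s` be the `pⁿ`-th root of `t` in `Ω`. Since `k` is perfect, the `n`-th Frobenius power maps
`k(s) ⊆ K^{1/pⁿ}` isomorphically onto `k(t) ⊆ K`, so `[K^{1/pⁿ} : k(s)] = [K : k(t)]`, which is
finite and nonzero. Comparing the towers `k(t) ⊆ k(s) ⊆ K^{1/pⁿ}` and `k(t) ⊆ K ⊆ K^{1/pⁿ}` gives
`[K^{1/pⁿ} : K] = [k(s) : k(t)]`, and `[k(s) : k(sᵐ)] = m` for transcendental `s`, as for the
rational function field `k(X) ⊇ k(Xᵐ)`.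
-/

open IntermediateField

theorem Transcendental.relfinrank_adjoin_simple_pow {k Ω : Type*} [Field k] [Field Ω]
    [Algebra k Ω] {u : Ω} (hu : Transcendental k u) (m : ℕ) :
    relfinrank k⟮u ^ m⟯ k⟮u⟯ = m := by
  let φ : RatFunc k →ₐ[k] Ω := (val _).comp (RatFunc.algEquivOfTranscendental u hu).toAlgHom
  have hmap (f : RatFunc k) : k⟮f⟯.map φ = k⟮φ f⟯ := by
    rw [adjoin_map, Set.image_singleton]
  have hφ : φ RatFunc.X = u := by simp [φ]
  rw [← hφ, ← map_pow, ← hmap, ← hmap, relfinrank_map_map, RatFunc.adjoin_X, relfinrank_top_right,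
    RatFunc.finrank_eq_max_natDegree, ← RatFunc.algebraMap_X, ← map_pow, RatFunc.num_algebraMap,
    RatFunc.denom_algebraMap]
  simp

theorem iterateFrobenius_surjective (R : Type*) [CommSemiring R] (p n : ℕ) [ExpChar R p]
    [PerfectRing R p] : Function.Surjective (iterateFrobenius R p n) := by
  rw [← coe_iterateFrobeniusEquiv]
  exact (iterateFrobeniusEquiv R p n).surjective

theorem IntermediateField.toSubfield_adjoin_map_iterateFrobenius {k Ω : Type*} [Field k]
    [Field Ω] [Algebra k Ω] (p n : ℕ) [ExpChar k p] [ExpChar Ω p] [PerfectRing k p] (S : Set Ω) :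
    (adjoin k S).toSubfield.map (iterateFrobenius Ω p n) =
      (adjoin k (iterateFrobenius Ω p n '' S)).toSubfield := by
  have hk : iterateFrobenius Ω p n '' Set.range (algebraMap k Ω) = Set.range (algebraMap k Ω) := by
    have hcomm :
        iterateFrobenius Ω p n ∘ algebraMap k Ω = algebraMap k Ω ∘ iterateFrobenius k p n :=
      funext fun x ↦ ((algebraMap k Ω).map_iterateFrobenius p x n).symm
    rw [← Set.range_comp, hcomm, (iterateFrobenius_surjective k p n).range_comp]
  rw [adjoin_toSubfield, adjoin_toSubfield, RingHom.map_field_closure, Set.image_union, hk]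

theorem Subfield.relfinrank_eq_of_relfinrank_eq {E : Type*} [Field E] {T S A B : Subfield E}
    (hTS : T ≤ S) (hSB : S ≤ B) (hTA : T ≤ A) (hAB : A ≤ B)
    (h : S.relfinrank B = T.relfinrank A) (h0 : T.relfinrank A ≠ 0) :
    A.relfinrank B = T.relfinrank S := by
  have := (relfinrank_mul_relfinrank hTS hSB).trans (relfinrank_mul_relfinrank hTA hAB).symm
  rw [h, mul_comm] at this
  exact (Nat.eq_of_mul_eq_mul_left (Nat.pos_of_ne_zero h0) this).symm

theorem IntermediateField.relfinrank_map_fieldRange {k K Ω : Type*} [Field k] [Field K] [Field Ω]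
    [Algebra k K] [Algebra k Ω] (F : IntermediateField k K) (f : K →ₐ[k] Ω) :
    relfinrank (F.map f) f.fieldRange = Module.finrank F K := by
  rw [f.fieldRange_eq_map, relfinrank_map_map, relfinrank_top_right]

theorem IntermediateField.toSubfield_map_iterateFrobenius_of_mem_iff {K Ω : Type*} [Field K]
    [Field Ω] [Algebra K Ω] (p n : ℕ) [ExpChar Ω p] [PerfectRing Ω p] (E : IntermediateField K Ω)
    (hE : ∀ x : Ω, x ∈ E ↔ x ^ p ^ n ∈ Set.range (algebraMap K Ω)) :
    E.toSubfield.map (iterateFrobenius Ω p n) = (algebraMap K Ω).fieldRange := by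
  have hE' : E.toSubfield = (algebraMap K Ω).fieldRange.comap (iterateFrobenius Ω p n) := by
    ext x
    simp only [Subfield.mem_comap, RingHom.mem_fieldRange, iterateFrobenius_def]
    exact hE x
  rw [hE', Subfield.map_comap_eq_self_of_surjective (iterateFrobenius_surjective Ω p n)]

theorem IntermediateField.finrank_eq_pow_of_mem_iff_pow_mem_range {k K Ω : Type*} [Field k]
    [Field K] [Field Ω] [Algebra k K] [Algebra K Ω] [Algebra k Ω] [IsScalarTower k K Ω] (p n : ℕ)
    [ExpChar k p] [ExpChar Ω p] [PerfectRing k p] [PerfectRing Ω p] {t : K}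
    (ht : Transcendental k t) [FiniteDimensional k⟮t⟯ K] (E : IntermediateField K Ω)
    (hE : ∀ x : Ω, x ∈ E ↔ x ^ p ^ n ∈ Set.range (algebraMap K Ω)) :
    Module.finrank K E = p ^ n := by
  set ψ := iterateFrobenius Ω p n
  let ι := IsScalarTower.toAlgHom k K Ω
  obtain ⟨s, hs⟩ := iterateFrobenius_surjective Ω p n (ι t)
  rw [iterateFrobenius_def] at hs
  have hT : k⟮t⟯.map ι = k⟮s ^ p ^ n⟯ := by rw [adjoin_map, Set.image_singleton, hs]
  have hs_transc : Transcendental k s := fun h ↦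
    (transcendental_algebraMap_iff (algebraMap K Ω).injective).2 ht (hs ▸ h.pow (p ^ n))
  set T := k⟮s ^ p ^ n⟯.toSubfield
  set S := k⟮s⟯.toSubfield
  set A := (algebraMap K Ω).fieldRange
  set B := E.toSubfield
  have hTS : T ≤ S := (adjoin_simple_le_iff.2 (pow_mem (mem_adjoin_simple_self k s) _) :)
  have hSB : S ≤ B :=
    (adjoin_simple_le_iff.2 ((hE s).2 ⟨t, hs.symm⟩) : k⟮s⟯ ≤ E.restrictScalars k)
  have hTA : T ≤ A := by
    simp only [T, ← hT]
    rintro _ ⟨y, -, rfl⟩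
    exact ⟨y, rfl⟩
  have hAB : A ≤ B := by
    rintro _ ⟨y, rfl⟩
    exact (hE _).2 ⟨y ^ p ^ n, map_pow _ _ _⟩
  have hTA_rank : T.relfinrank A = Module.finrank k⟮t⟯ K := by
    rw [← relfinrank_map_fieldRange k⟮t⟯ ι, hT]
    rfl
  have hST : S.map ψ = T := by
    rw [toSubfield_adjoin_map_iterateFrobenius, Set.image_singleton, iterateFrobenius_def]
  have hBA : B.map ψ = A := E.toSubfield_map_iterateFrobenius_of_mem_iff p n hE
  have key := Subfield.relfinrank_eq_of_relfinrank_eq hTS hSB hTA hAB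
    (by rw [← Subfield.relfinrank_map_map S B ψ, hST, hBA]) (hTA_rank ▸ Module.finrank_pos.ne')
  rw [← IntermediateField.relfinrank_bot_left, IntermediateField.relfinrank, bot_toSubfield, key]
  exact hs_transc.relfinrank_adjoin_simple_pow (p ^ n)

theorem stmt3_general (p n : ℕ) (hp : Fact p.Prime)
    (k K L Ω : Type*) [Field k] [Field K] [Field L] [Field Ω]
    [Algebra k K]
    [Algebra K Ω] [Algebra L Ω] [IsAlgClosure L Ω]
    [CharP k p] [CharP Ω p] [PerfectField k]
    (t : K) (ht : Transcendental k t)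
    (hKfin : FiniteDimensional (IntermediateField.adjoin k {t}) K)
    (Kroot : IntermediateField K Ω)
    (hKroot : ∀ x : Ω, x ∈ Kroot ↔ x ^ p ^ n ∈ Set.range (algebraMap K Ω)) :
    Module.finrank K Kroot = p ^ n := by
  let _ : Algebra k Ω := ((algebraMap K Ω).comp (algebraMap k K)).toAlgebra
  have : IsScalarTower k K Ω := IsScalarTower.of_algebraMap_eq fun _ ↦ rfl
  have : ExpChar k p := ExpChar.prime hp.out
  have : ExpChar Ω p := ExpChar.prime hp.out
  have : IsAlgClosed Ω := IsAlgClosure.isAlgClosed L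
  exact Kroot.finrank_eq_pow_of_mem_iff_pow_mem_range p n ht hKroot

/-- In the setting of the purely inseparable lemma: `k` is a perfect field of
characteristic `p > 0`, `K` has transcendence degree 1 over `k` (it contains a transcendental
element `t` with `[K : k(t)]` finite), `L/K` is a finite purely inseparable extension with
`[L : K] = p ^ n`, and `Ω` is a fixed algebraic closure of `L` (hence of `K`).  Then
`[K^{1/pⁿ} : K] = p ^ n`, where `K^{1/pⁿ} ⊆ Ω` is the field of `pⁿ`-th roots of elements
of `K`. -/
theorem stmt3 (p n : ℕ) (hp : Fact p.Prime)
    (k K L Ω : Type*) [Field k] [Field K] [Field L] [Field Ω]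
    [Algebra k K] [Algebra K L] [Algebra k L] [IsScalarTower k K L]
    [Algebra K Ω] [Algebra L Ω] [IsScalarTower K L Ω] [IsAlgClosure L Ω]
    [CharP k p] [CharP Ω p] [PerfectField k]
    [IsPurelyInseparable K L] [FiniteDimensional K L]
    (t : K) (ht : Transcendental k t)
    (hKfin : FiniteDimensional (IntermediateField.adjoin k {t}) K)
    (hdeg : Module.finrank K L = p ^ n)
    (Kroot : IntermediateField K Ω)
    (hKroot : ∀ x : Ω, x ∈ Kroot ↔ x ^ p ^ n ∈ Set.range (algebraMap K Ω)) :
    Module.finrank K Kroot = p ^ n :=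
  stmt3_general p n hp k K L Ω t ht hKfin Kroot hKroot
end

section
/- Let C be a smooth proper pointed curve over 𝔽_q with effective divisor 𝔪 and U the complement of Supp(𝔪), with Abel–Jacobi embedding j_𝔪 : U → J_𝔪 assumed injective (dim J_𝔪 ≥ 2). Let E be a degree-0 divisor on U coprime to 𝔪 and c the base point. Then E + c is congruent modulo P_𝔪 to an 𝔽_q-rational point of U if and only if there is exactly one effective divisor D on U with D ≡ E + c modulo P_𝔪. -/
/-! We model the smooth proper pointed curve `C` over `𝔽_q` by its function field `K`
(over `Fq`), its set `Pt` of closed points with degrees `deg : Pt → ℕ`, and the normalized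
valuations `ord x` at the points.  Divisors are finitely supported functions `Pt → ℤ`,
the degree of a divisor `D` is `∑ᶠ x, D x * deg x`, and `P_𝔪` is the group of divisors of
rational functions congruent to `1` mod `𝔪`.  `D ≡_𝔪 D'` means `D - D' ∈ P_𝔪`. -/

/-- `f ≡ 1 mod 𝔪`. -/
def congOne {K Pt : Type*} [Field K] (ord : Pt → K → ℤ) (S : Finset Pt) (𝔪 : Pt → ℕ)
    (f : K) : Prop :=
  f = 1 ∨ ∀ x ∈ S, (𝔪 x : ℤ) ≤ ord x (f - 1)

/-- The group `P_𝔪` of divisors of rational functions congruent to `1` mod `𝔪`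
(the set is genuinely a subgroup, so taking the closure does not change it). -/
def Pmod {K Pt : Type*} [Field K] (ord : Pt → K → ℤ) (S : Finset Pt) (𝔪 : Pt → ℕ) :
    AddSubgroup (Pt → ℤ) :=
  AddSubgroup.closure
    {D | ∃ f : K, f ≠ 0 ∧ congOne ord S 𝔪 f ∧ D = fun x => ord x f}


/-! Elements of `P_𝔪` have degree `0`, so every effective `D ≡_𝔪 E + c` has degree `1`.
Since all points have positive degree, such a `D` is a single rational point `d ∉ S`; two
such points differ by an element of `P_𝔪`, so injectivity of the Abel–Jacobi map makes `d`
unique. -/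

open Function

section Degree

variable {Pt : Type*} (deg : Pt → ℕ)

noncomputable def divDegree (D : Pt → ℤ) : ℤ :=
  ∑ᶠ x, D x * (deg x : ℤ)

variable {deg}

lemma hasFiniteSupport_mul_deg {D : Pt → ℤ} (hD : (support D).Finite) :
    HasFiniteSupport fun x => D x * (deg x : ℤ) :=
  hD.subset (support_mul_subset_left _ _)

lemma divDegree_add {A B : Pt → ℤ} (hA : (support A).Finite) (hB : (support B).Finite) :
    divDegree deg (A + B) = divDegree deg A + divDegree deg B := by
  simp only [divDegree, Pi.add_apply, add_mul]
  exact finsum_add_distrib (hasFiniteSupport_mul_deg hA) (hasFiniteSupport_mul_deg hB)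

lemma divDegree_neg (A : Pt → ℤ) : divDegree deg (-A) = -divDegree deg A := by
  simp only [divDegree, Pi.neg_apply, neg_mul]
  exact finsum_neg_distrib _

lemma divDegree_sub {A B : Pt → ℤ} (hA : (support A).Finite) (hB : (support B).Finite) :
    divDegree deg (A - B) = divDegree deg A - divDegree deg B := by
  rw [sub_eq_add_neg, divDegree_add hA (by rwa [support_neg]), divDegree_neg, sub_eq_add_neg]

lemma finite_support_single [DecidableEq Pt] (d : Pt) : (support (Pi.single d (1 : ℤ))).Finite :=
  (Set.finite_singleton d).subset Pi.support_single_subset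

lemma divDegree_single [DecidableEq Pt] (d : Pt) :
    divDegree deg (Pi.single d 1) = deg d := by
  rw [divDegree, finsum_eq_single _ d fun x hx => by simp [hx]]
  simp

lemma mul_deg_le_divDegree {D : Pt → ℤ} (hD : (support D).Finite) (hnonneg : 0 ≤ D) (x : Pt) :
    D x * (deg x : ℤ) ≤ divDegree deg D :=
  single_le_finsum x (hasFiniteSupport_mul_deg hD) fun y => mul_nonneg (hnonneg y) (by positivity)

lemma exists_eq_single_of_divDegree_eq_one [DecidableEq Pt] (hdeg_pos : ∀ x, 0 < deg x)
    {D : Pt → ℤ} (hD : (support D).Finite) (hnonneg : 0 ≤ D) (hdeg : divDegree deg D = 1) :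
    ∃ d, deg d = 1 ∧ D = Pi.single d 1 := by
  obtain ⟨d, hd⟩ : ∃ d, D d ≠ 0 := by
    by_contra! h
    simp [show D = 0 from funext h, divDegree] at hdeg
  have hDd : 1 ≤ D d := lt_of_le_of_ne (hnonneg d) hd.symm
  set R := D - Pi.single d 1 with hR
  have hRfin : (support R).Finite :=
    (hD.union (finite_support_single d)).subset (support_sub _ _)
  have hRnonneg : 0 ≤ R := fun x => by
    by_cases hx : x = d
    · subst hx; simpa [hR] using hDd
    · simpa [hR, hx] using hnonneg x
  have hRdeg : divDegree deg R = 1 - deg d := by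
    rw [hR, divDegree_sub hD (finite_support_single d), divDegree_single, hdeg]
  have hRterm : ∀ x, R x * (deg x : ℤ) ≤ 1 - deg d := fun x =>
    hRdeg ▸ mul_deg_le_divDegree hRfin hRnonneg x
  have hdeg_d : deg d = 1 := by
    have : (deg d : ℤ) ≤ 1 := by
      linarith [hRterm d, mul_nonneg (hRnonneg d) (Int.natCast_nonneg (deg d))]
    have := hdeg_pos d
    omega
  refine ⟨d, hdeg_d, funext fun x => sub_eq_zero.mp ?_⟩
  have hRx := hRterm x
  rw [hdeg_d, Nat.cast_one, sub_self] at hRx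
  exact le_antisymm (nonpos_of_mul_nonpos_left hRx (by exact_mod_cast hdeg_pos x)) (hRnonneg x)

variable (deg)

def degreeZeroDivisors : AddSubgroup (Pt → ℤ) where
  carrier := {D | (support D).Finite ∧ divDegree deg D = 0}
  zero_mem' := ⟨by simp, by simp [divDegree]⟩
  add_mem' := fun ⟨hA, hAdeg⟩ ⟨hB, hBdeg⟩ =>
    ⟨(hA.union hB).subset (support_add _ _), by rw [divDegree_add hA hB, hAdeg, hBdeg, add_zero]⟩
  neg_mem' := fun ⟨hA, hAdeg⟩ => ⟨by rwa [support_neg], by rw [divDegree_neg, hAdeg, neg_zero]⟩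

end Degree

lemma Pmod_le_degreeZeroDivisors {K Pt : Type*} [Field K] {ord : Pt → K → ℤ} {deg : Pt → ℕ}
    (hfin : ∀ f : K, f ≠ 0 → {x : Pt | ord x f ≠ 0}.Finite)
    (hdeg0 : ∀ f : K, f ≠ 0 → ∑ᶠ x, ord x f * (deg x : ℤ) = 0) (S : Finset Pt) (𝔪 : Pt → ℕ) :
    Pmod ord S 𝔪 ≤ degreeZeroDivisors deg :=
  (AddSubgroup.closure_le _).mpr fun _ ⟨f, hf, _, hD⟩ => hD ▸ ⟨hfin f hf, hdeg0 f hf⟩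

section DegreeOne

variable {Pt : Type*} [DecidableEq Pt] {deg : Pt → ℕ} {H : AddSubgroup (Pt → ℤ)}
  {S : Finset Pt} {B : Pt → ℤ}

def IsEffectiveAwayFrom (S : Finset Pt) (D : Pt → ℤ) : Prop :=
  (support D).Finite ∧ 0 ≤ D ∧ ∀ x ∈ S, D x = 0

lemma exists_eq_single_of_sub_mem (hdeg_pos : ∀ x, 0 < deg x)
    (hH : H ≤ degreeZeroDivisors deg)
    (hB : (support B).Finite) (hBdeg : divDegree deg B = 1) {D : Pt → ℤ}
    (hD : IsEffectiveAwayFrom S D) (hDB : D - B ∈ H) :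
    ∃ d, deg d = 1 ∧ d ∉ S ∧ D = Pi.single d 1 := by
  obtain ⟨hDfin, hnonneg, hDS⟩ := hD
  obtain ⟨hDBfin, hDBdeg⟩ := hH hDB
  have hdeg : divDegree deg D = 1 := by
    rw [← sub_add_cancel D B, divDegree_add hDBfin hB, hDBdeg, hBdeg, zero_add]
  obtain ⟨d, hd, rfl⟩ := exists_eq_single_of_divDegree_eq_one hdeg_pos hDfin hnonneg hdeg
  exact ⟨d, hd, fun hdS => by simpa using hDS d hdS, rfl⟩

lemma isEffectiveAwayFrom_single {d : Pt} (hd : d ∉ S) :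
    IsEffectiveAwayFrom S (Pi.single d 1) :=
  ⟨finite_support_single d, Pi.single_nonneg.mpr zero_le_one,
    fun x hx => Pi.single_eq_of_ne (by rintro rfl; exact hd hx) _⟩

theorem exists_single_sub_mem_iff_existsUnique (hdeg_pos : ∀ x, 0 < deg x)
    (hH : H ≤ degreeZeroDivisors deg)
    (hinj : ∀ x y, deg x = 1 → deg y = 1 → x ∉ S → y ∉ S → Pi.single x 1 - Pi.single y 1 ∈ H →
      x = y)
    (hB : (support B).Finite) (hBdeg : divDegree deg B = 1) :
    (∃ d, deg d = 1 ∧ d ∉ S ∧ Pi.single d 1 - B ∈ H) ↔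
      ∃! D, IsEffectiveAwayFrom S D ∧ D - B ∈ H := by
  constructor
  · rintro ⟨d, hd, hdS, hdB⟩
    refine ⟨Pi.single d 1, ⟨isEffectiveAwayFrom_single hdS, hdB⟩, fun D ⟨hD, hDB⟩ => ?_⟩
    obtain ⟨d', hd', hd'S, rfl⟩ := exists_eq_single_of_sub_mem hdeg_pos hH hB hBdeg hD hDB
    rw [hinj d' d hd' hd hd'S hdS (by simpa using H.sub_mem hDB hdB)]
  · rintro ⟨D, ⟨hD, hDB⟩, -⟩
    obtain ⟨d, hd, hdS, rfl⟩ := exists_eq_single_of_sub_mem hdeg_pos hH hB hBdeg hD hDB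
    exact ⟨d, hd, hdS, hDB⟩

end DegreeOne

theorem stmt12_general (K : Type*) [Field K]
    (Pt : Type*) [DecidableEq Pt] (ord : Pt → K → ℤ) (deg : Pt → ℕ)
    (hdeg_pos : ∀ x, 0 < deg x)
    (hfin : ∀ f : K, f ≠ 0 → {x : Pt | ord x f ≠ 0}.Finite)
    -- principal divisors have degree 0
    (hdeg0 : ∀ f : K, f ≠ 0 → ∑ᶠ x, ord x f * (deg x : ℤ) = 0)
    -- the modulus `𝔪`, supported exactly on `S`, and the base point `c`
    (S : Finset Pt) (𝔪 : Pt → ℕ)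
    (c : Pt) (hcdeg : deg c = 1)
    -- injectivity of the Abel–Jacobi map on rational points of `U` (from `dim J_𝔪 ≥ 2`)
    (hAJinj : ∀ x y : Pt, deg x = 1 → deg y = 1 → x ∉ S → y ∉ S →
      (fun z => (if z = x then (1 : ℤ) else 0) - (if z = y then 1 else 0)) ∈ Pmod ord S 𝔪 →
      x = y)
    -- `E` : a degree-0 divisor supported on `U`, coprime to `𝔪`
    (E : Pt → ℤ) (hEfin : (Function.support E).Finite)
    (hEdeg : ∑ᶠ x, E x * (deg x : ℤ) = 0) :
    (∃ d : Pt, deg d = 1 ∧ d ∉ S ∧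
        (fun x => (if x = d then (1 : ℤ) else 0) - (E x + if x = c then 1 else 0)) ∈
          Pmod ord S 𝔪) ↔
      (∃! D : Pt → ℤ,
        ((Function.support D).Finite ∧ (∀ x, 0 ≤ D x) ∧ (∀ x ∈ S, D x = 0)) ∧
        (fun x => D x - (E x + if x = c then 1 else 0)) ∈ Pmod ord S 𝔪) := by
  have hB : (support (E + Pi.single c 1)).Finite :=
    (hEfin.union (finite_support_single c)).subset (support_add _ _)
  have hBdeg : divDegree deg (E + Pi.single c 1) = 1 := by
    rw [divDegree_add hEfin (finite_support_single c), divDegree_single, hcdeg]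
    simpa [divDegree] using hEdeg
  simp only [← Pi.single_apply] at hAJinj ⊢
  exact exists_single_sub_mem_iff_existsUnique hdeg_pos
    (Pmod_le_degreeZeroDivisors hfin hdeg0 S 𝔪) hAJinj hB hBdeg

/-- Let `C` be a smooth proper pointed curve over `𝔽_q` with effective
modulus `𝔪` supported on `S`, base point `c ∉ S`, `U = C ∖ S`, and Abel–Jacobi map
`j_𝔪 : U → J_𝔪` assumed injective (`dim J_𝔪 ≥ 2`).  Let `E` be a degree-0 divisor on `U`.
Then `E + c` is congruent mod `P_𝔪` to an `𝔽_q`-rational point of `U` if and only if there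
is exactly one effective divisor `D` on `U` with `D ≡_𝔪 E + c`. -/
theorem stmt12 (Fq K : Type*) [Field Fq] [Finite Fq] [Field K] [Algebra Fq K]
    (Pt : Type*) [DecidableEq Pt] (ord : Pt → K → ℤ) (deg : Pt → ℕ)
    (hdeg_pos : ∀ x, 0 < deg x)
    (hord_zero : ∀ x, ord x 0 = 0)
    (hord_mul : ∀ x (f g : K), f ≠ 0 → g ≠ 0 → ord x (f * g) = ord x f + ord x g)
    (hord_add : ∀ x (f g : K), f ≠ 0 → g ≠ 0 → f + g ≠ 0 →
      min (ord x f) (ord x g) ≤ ord x (f + g))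
    (hunif : ∀ x : Pt, ∃ u : K, ord x u = 1)
    (hfin : ∀ f : K, f ≠ 0 → {x : Pt | ord x f ≠ 0}.Finite)
    -- principal divisors have degree 0
    (hdeg0 : ∀ f : K, f ≠ 0 → ∑ᶠ x, ord x f * (deg x : ℤ) = 0)
    -- the modulus `𝔪`, supported exactly on `S`, and the base point `c`
    (S : Finset Pt) (𝔪 : Pt → ℕ) (h𝔪 : ∀ x, 0 < 𝔪 x ↔ x ∈ S)
    (c : Pt) (hc : c ∉ S) (hcdeg : deg c = 1)
    -- injectivity of the Abel–Jacobi map on rational points of `U` (from `dim J_𝔪 ≥ 2`)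
    (hAJinj : ∀ x y : Pt, deg x = 1 → deg y = 1 → x ∉ S → y ∉ S →
      (fun z => (if z = x then (1 : ℤ) else 0) - (if z = y then 1 else 0)) ∈ Pmod ord S 𝔪 →
      x = y)
    -- `E` : a degree-0 divisor supported on `U`, coprime to `𝔪`
    (E : Pt → ℤ) (hEfin : (Function.support E).Finite) (hES : ∀ x ∈ S, E x = 0)
    (hEdeg : ∑ᶠ x, E x * (deg x : ℤ) = 0) :
    (∃ d : Pt, deg d = 1 ∧ d ∉ S ∧
        (fun x => (if x = d then (1 : ℤ) else 0) - (E x + if x = c then 1 else 0)) ∈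
          Pmod ord S 𝔪) ↔
      (∃! D : Pt → ℤ,
        ((Function.support D).Finite ∧ (∀ x, 0 ≤ D x) ∧ (∀ x ∈ S, D x = 0)) ∧
        (fun x => D x - (E x + if x = c then 1 else 0)) ∈ Pmod ord S 𝔪) :=
  stmt12_general K Pt ord deg hdeg_pos hfin hdeg0 S 𝔪 c hcdeg hAJinj E hEfin hEdeg
end
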